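/- For n, h, k ≥ 1, let u(n,h,k) denote the number of strong-Baxter permutations of size n with label (h,k). Then u(1,1,1) = 1 and u(1,h,k) = 0 for (h,k) ≠ (1,1), and for all n ≥ 1 and all h, k ≥ 1: u(n+1, h, k) = Σ_{h' > h} u(n, h', k) + u(n, h, k−1) + [h ≥ 2]·Σ_{k' ≥ k} u(n, h−1, k'), where u(n, ·, 0) is interpreted as 0 and [h ≥ 2] equals 1 if h ≥ 2 and 0 otherwise. (This is the recurrence on label counts encoded by the succession rule Ω_strong of Proposition 5.3, under which the label (h,k) produces the labels (1,k),…,(h−1,k),(h,k+1) and (h+1,1),…,(h+1,k).) -/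

import Mathlib

/-- `f` contains the vincular pattern 2-41-3. -/
def Contains2413 {m : ℕ} (f : Fin m → Fin m) : Prop :=
  ∃ i j j' k : Fin m, (i : ℕ) < (j : ℕ) ∧ (j' : ℕ) = (j : ℕ) + 1 ∧ (j' : ℕ) < (k : ℕ) ∧
    f j' < f i ∧ f i < f k ∧ f k < f j

/-- `f` contains the vincular pattern 3-14-2. -/
def Contains3142 {m : ℕ} (f : Fin m → Fin m) : Prop :=
  ∃ i j j' k : Fin m, (i : ℕ) < (j : ℕ) ∧ (j' : ℕ) = (j : ℕ) + 1 ∧ (j' : ℕ) < (k : ℕ) ∧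
    f j < f k ∧ f k < f i ∧ f i < f j'

/-- `f` contains the vincular pattern 3-41-2. -/
def Contains3412 {m : ℕ} (f : Fin m → Fin m) : Prop :=
  ∃ i j j' k : Fin m, (i : ℕ) < (j : ℕ) ∧ (j' : ℕ) = (j : ℕ) + 1 ∧ (j' : ℕ) < (k : ℕ) ∧
    f j' < f k ∧ f k < f i ∧ f i < f j

/-- A strong-Baxter function avoids all three patterns 2-41-3, 3-14-2 and 3-41-2. -/
def StrongBaxterFun {m : ℕ} (f : Fin m → Fin m) : Prop :=
  ¬ Contains2413 f ∧ ¬ Contains3142 f ∧ ¬ Contains3412 f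

/-- A strong-Baxter permutation avoids all three patterns 2-41-3, 3-14-2 and 3-41-2. -/
def IsStrongBaxter {n : ℕ} (π : Equiv.Perm (Fin n)) : Prop := StrongBaxterFun ⇑π

/-- The local expansion `π · a` on the right of `π` (with 0-indexed values). -/
def insertFun {n : ℕ} (π : Equiv.Perm (Fin n)) (a : Fin (n + 1)) :
    Fin (n + 1) → Fin (n + 1) := fun i =>
  if h : (i : ℕ) < n then
    (if ((π ⟨i, h⟩ : Fin n) : ℕ) < (a : ℕ)
      then ⟨((π ⟨i, h⟩ : Fin n) : ℕ), Nat.lt_succ_of_lt (π ⟨i, h⟩).isLt⟩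
      else ⟨((π ⟨i, h⟩ : Fin n) : ℕ) + 1, Nat.succ_lt_succ (π ⟨i, h⟩).isLt⟩)
  else a

/-- Number of strong-Baxter permutations of size `n` with label `(h, k)`: `h`
(resp. `k`) is the number of active sites weakly below (resp. strictly above)
the last entry. -/
noncomputable def strongBaxterLabelCount (n h k : ℕ) : ℕ :=
  Nat.card {π : Equiv.Perm (Fin n) // IsStrongBaxter π ∧
    ∃ hn : 0 < n,
      h = Nat.card {a : Fin (n + 1) // StrongBaxterFun (insertFun π a) ∧
            (a : ℕ) ≤ ((π ⟨n - 1, Nat.sub_lt hn Nat.one_pos⟩ : Fin n) : ℕ)} ∧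
      k = Nat.card {a : Fin (n + 1) // StrongBaxterFun (insertFun π a) ∧
            ((π ⟨n - 1, Nat.sub_lt hn Nat.one_pos⟩ : Fin n) : ℕ) < (a : ℕ)}}

/-!
A permutation `σ` of size `n + 1` is `π · a` for a unique pair: `a` is its last entry and `π`
the standardisation of the others. An occurrence of one of the three patterns in `π · a` either
lies in `π` or ends at the new last entry, so `π · a` is strong-Baxter iff `π` is and no
occurrence `π_i, π_j, π_{j+1}` of the first three letters of a pattern blocks the gap `a`. The
gaps blocked in `π · a` are those of `π` (renumbered) together with intervals cut out by the last
two entries `π_n` and `a`. Counting the active sites below and above the new last entry then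
shows that, for `π` with label `(h, k)`, the child at its `r`-th active site from the bottom has
label `(r, k)`, `(h, k + 1)` or `(h + 1, h + k + 1 - r)` according as `r < h`, `r = h` or
`r > h`; summing over the parents `π` gives the recurrence.
-/
namespace StrongBaxter

open Finset

/-- The three patterns read on the values `x = π_i`, `y = π_j`, `z = π_{j+1}`, `w = π_k`. -/
def SBPattern (x y z w : ℕ) : Prop :=
  (z < x ∧ x < w ∧ w < y) ∨ (y < w ∧ w < x ∧ x < z) ∨ (z < w ∧ w < x ∧ x < y)

/-- `SBPattern` with `w` replaced by a new last entry inserted in the gap `b`, i.e. just below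
the old value `b`. -/
def GapPattern (x y z b : ℕ) : Prop :=
  (z < x ∧ x < b ∧ b ≤ y) ∨ (y < b ∧ b ≤ x ∧ x < z) ∨ (z < b ∧ b ≤ x ∧ x < y)

def ContainsSB (v : ℕ → ℕ) (m : ℕ) : Prop :=
  ∃ i j k, i < j ∧ j + 1 < k ∧ k < m ∧ SBPattern (v i) (v j) (v (j + 1)) (v k)

def IsBlockedGap (v : ℕ → ℕ) (m b : ℕ) : Prop :=
  ∃ i j, i < j ∧ j + 1 < m ∧ GapPattern (v i) (v j) (v (j + 1)) b

/-- The relabelling of an old value `v` in `π · a`. -/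
def shiftVal (a v : ℕ) : ℕ := if v < a then v else v + 1

/-- The gap of the old sequence that the gap `b` of the new sequence lies in. -/
def unshiftGap (a b : ℕ) : ℕ := if b ≤ a then b else b - 1

theorem shiftVal_strictMono (a : ℕ) : StrictMono (shiftVal a) := by
  intro u v h
  simp only [shiftVal]
  split_ifs <;> omega

theorem sbPattern_shiftVal_iff {a x y z w : ℕ} :
    SBPattern (shiftVal a x) (shiftVal a y) (shiftVal a z) (shiftVal a w) ↔ SBPattern x y z w := by
  simp only [SBPattern, (shiftVal_strictMono a).lt_iff_lt]

theorem sbPattern_shiftVal_gap_iff {a x y z : ℕ} :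
    SBPattern (shiftVal a x) (shiftVal a y) (shiftVal a z) a ↔ GapPattern x y z a := by
  simp only [SBPattern, GapPattern, shiftVal]
  split_ifs <;> omega

theorem gapPattern_shiftVal_iff {a x y z b : ℕ} :
    GapPattern (shiftVal a x) (shiftVal a y) (shiftVal a z) b ↔
      GapPattern x y z (unshiftGap a b) := by
  simp only [GapPattern, shiftVal, unshiftGap]
  split_ifs <;> omega

theorem not_gapPattern_self {x y z : ℕ} : ¬ GapPattern x y z z := by
  simp only [GapPattern]
  omega

theorem GapPattern.sbPattern {x y z w : ℕ} (h : GapPattern x y z w) (hx : w ≠ x) (hy : w ≠ y) :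
    SBPattern x y z w := by
  simp only [GapPattern, SBPattern] at h ⊢
  omega

/-- The gaps blocked by the pair formed by the last old entry `p` and a new last entry `a`. -/
theorem exists_gapPattern_shiftVal_iff {n a p b : ℕ} (hp : p < n) (ha : a ≤ n) :
    (∃ u < n, u ≠ p ∧ GapPattern (shiftVal a u) (shiftVal a p) a b) ↔
      (p < b ∧ b < a) ∨ (a < b ∧ b ≤ p) ∨ (a + 1 < b ∧ b = p + 1) := by
  constructor
  · rintro ⟨u, -, hup, hg⟩
    simp only [GapPattern, shiftVal] at hg
    split_ifs at hg <;> omega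
  · rintro (hb | hb | hb)
    · refine ⟨b, by omega, by omega, ?_⟩
      simp only [GapPattern, shiftVal]
      split_ifs <;> omega
    · refine ⟨b - 1, by omega, by omega, ?_⟩
      simp only [GapPattern, shiftVal]
      split_ifs <;> omega
    · refine ⟨a, by omega, by omega, ?_⟩
      simp only [GapPattern, shiftVal]
      split_ifs <;> omega

section Snoc

variable {v w : ℕ → ℕ} {n a : ℕ}

theorem containsSB_succ_iff (hw : ∀ i < n, w i = shiftVal a (v i)) (hwn : w n = a) :
    ContainsSB w (n + 1) ↔ ContainsSB v n ∨ IsBlockedGap v n a := by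
  constructor
  · rintro ⟨i, j, k, hij, hjk, hkn, hp⟩
    rw [hw i (by omega), hw j (by omega), hw (j + 1) (by omega)] at hp
    rcases Nat.lt_or_ge k n with hk | hk
    · rw [hw k hk, sbPattern_shiftVal_iff] at hp
      exact Or.inl ⟨i, j, k, hij, hjk, hk, hp⟩
    · rw [show k = n by omega, hwn, sbPattern_shiftVal_gap_iff] at hp
      exact Or.inr ⟨i, j, hij, by omega, hp⟩
  · rintro (⟨i, j, k, hij, hjk, hkn, hp⟩ | ⟨i, j, hij, hjn, hp⟩)
    · refine ⟨i, j, k, hij, hjk, by omega, ?_⟩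
      rwa [hw i (by omega), hw j (by omega), hw (j + 1) (by omega), hw k hkn,
        sbPattern_shiftVal_iff]
    · refine ⟨i, j, n, hij, hjn, by omega, ?_⟩
      rwa [hw i (by omega), hw j (by omega), hw (j + 1) hjn, hwn, sbPattern_shiftVal_gap_iff]

theorem isBlockedGap_succ_iff (hw : ∀ i < n, w i = shiftVal a (v i)) (hwn : w n = a) (b : ℕ) :
    IsBlockedGap w (n + 1) b ↔ IsBlockedGap v n (unshiftGap a b) ∨
      ∃ i, i + 1 < n ∧ GapPattern (shiftVal a (v i)) (shiftVal a (v (n - 1))) a b := by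
  constructor
  · rintro ⟨i, j, hij, hjn, hp⟩
    rw [hw i (by omega), hw j (by omega)] at hp
    rcases Nat.lt_or_ge (j + 1) n with hj | hj
    · rw [hw (j + 1) hj, gapPattern_shiftVal_iff] at hp
      exact Or.inl ⟨i, j, hij, hj, hp⟩
    · rw [show j + 1 = n by omega, hwn, show j = n - 1 by omega] at hp
      exact Or.inr ⟨i, by omega, hp⟩
  · rintro (⟨i, j, hij, hjn, hp⟩ | ⟨i, hin, hp⟩)
    · refine ⟨i, j, hij, by omega, ?_⟩
      rwa [hw i (by omega), hw j (by omega), hw (j + 1) hjn, gapPattern_shiftVal_iff]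
    · refine ⟨i, n - 1, by omega, by omega, ?_⟩
      rwa [hw i (by omega), hw (n - 1) (by omega), show n - 1 + 1 = n by omega, hwn]

end Snoc

theorem not_isBlockedGap_last {v : ℕ → ℕ} {n : ℕ} (hv : ¬ ContainsSB v n)
    (hinj : Set.InjOn v (Set.Iio n)) : ¬ IsBlockedGap v n (v (n - 1)) := by
  rintro ⟨i, j, hij, hjn, hp⟩
  rcases Nat.lt_or_ge (j + 1) (n - 1) with hj | hj
  · have hne : ∀ {x}, x < n - 1 → v (n - 1) ≠ v x := fun hx he =>
      absurd (hinj (Set.mem_Iio.2 (by omega)) (Set.mem_Iio.2 (by omega)) he) (by omega)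
    exact hv ⟨i, j, n - 1, hij, hj, by omega, hp.sbPattern (hne (by omega)) (hne (by omega))⟩
  · rw [show j + 1 = n - 1 by omega] at hp
    exact not_gapPattern_self hp

/-- The values of `f` as a sequence of naturals, with junk value `0` from `m` on. -/
def valSeq {m : ℕ} (f : Fin m → Fin m) (i : ℕ) : ℕ := if h : i < m then f ⟨i, h⟩ else 0

theorem valSeq_of_lt {m : ℕ} (f : Fin m → Fin m) {i : ℕ} (hi : i < m) :
    valSeq f i = f ⟨i, hi⟩ :=
  dif_pos hi

theorem containsSB_valSeq_iff {m : ℕ} (f : Fin m → Fin m) :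
    ContainsSB (valSeq f) m ↔ Contains2413 f ∨ Contains3142 f ∨ Contains3412 f := by
  constructor
  · rintro ⟨i, j, k, hij, hjk, hkm, hp⟩
    rw [valSeq_of_lt f (by omega : i < m), valSeq_of_lt f (by omega : j < m),
      valSeq_of_lt f (by omega : j + 1 < m), valSeq_of_lt f hkm] at hp
    simp only [SBPattern, ← Fin.lt_def] at hp
    rcases hp with hp | hp | hp
    · exact Or.inl ⟨⟨i, _⟩, ⟨j, _⟩, ⟨j + 1, _⟩, ⟨k, hkm⟩, hij, rfl, hjk, hp⟩
    · exact Or.inr (Or.inl ⟨⟨i, _⟩, ⟨j, _⟩, ⟨j + 1, _⟩, ⟨k, hkm⟩, hij, rfl, hjk, hp⟩)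
    · exact Or.inr (Or.inr ⟨⟨i, _⟩, ⟨j, _⟩, ⟨j + 1, _⟩, ⟨k, hkm⟩, hij, rfl, hjk, hp⟩)
  · rintro (⟨i, j, j', k, hij, hj', hjk, hp⟩ | ⟨i, j, j', k, hij, hj', hjk, hp⟩ |
        ⟨i, j, j', k, hij, hj', hjk, hp⟩) <;>
    · refine ⟨i, j, k, hij, hj' ▸ hjk, k.isLt, ?_⟩
      rw [← hj', valSeq_of_lt f i.isLt, valSeq_of_lt f j.isLt, valSeq_of_lt f j'.isLt,
        valSeq_of_lt f k.isLt]
      simp only [SBPattern, Fin.eta, ← Fin.lt_def]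
      tauto

theorem strongBaxterFun_iff {m : ℕ} (f : Fin m → Fin m) :
    StrongBaxterFun f ↔ ¬ ContainsSB (valSeq f) m := by
  rw [containsSB_valSeq_iff, StrongBaxterFun, not_or, not_or]

theorem valSeq_lt {m : ℕ} (f : Fin m → Fin m) {i : ℕ} (hi : i < m) : valSeq f i < m := by
  rw [valSeq_of_lt f hi]
  exact Fin.isLt _

theorem valSeq_injOn {n : ℕ} (π : Equiv.Perm (Fin n)) : Set.InjOn (valSeq π) (Set.Iio n) := by
  intro i hi j hj h
  rw [valSeq_of_lt π hi, valSeq_of_lt π hj] at h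
  exact congrArg Fin.val (π.injective (Fin.ext h))

theorem exists_valSeq_of_lt_last_iff {n : ℕ} (π : Equiv.Perm (Fin n)) (hn : 0 < n)
    (P : ℕ → Prop) :
    (∃ i, i + 1 < n ∧ P (valSeq π i)) ↔ ∃ u < n, u ≠ valSeq π (n - 1) ∧ P u := by
  constructor
  · rintro ⟨i, hi, hP⟩
    refine ⟨valSeq π i, valSeq_lt π (by omega), fun h => ?_, hP⟩
    have := valSeq_injOn π (Set.mem_Iio.2 (by omega)) (Set.mem_Iio.2 (by omega)) h
    omega
  · rintro ⟨u, hu, hup, hP⟩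
    obtain ⟨i, hi⟩ := π.surjective ⟨u, hu⟩
    have hiu : valSeq π i = u := by rw [valSeq_of_lt π i.isLt, Fin.eta, hi]
    refine ⟨i, ?_, hiu ▸ hP⟩
    by_contra h
    exact hup (by rw [← hiu, show (i : ℕ) = n - 1 by omega])

section Insert

variable {n : ℕ} (π : Equiv.Perm (Fin n)) (a : Fin (n + 1))

theorem insertFun_castSucc (i : Fin n) : insertFun π a i.castSucc = a.succAbove (π i) := by
  ext
  simp only [insertFun, Fin.val_castSucc, i.isLt, dif_pos, Fin.eta, Fin.succAbove, Fin.lt_def]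
  split_ifs <;> rfl

theorem insertFun_last : insertFun π a (Fin.last n) = a := by
  simp [insertFun]

theorem valSeq_insertFun_of_lt {i : ℕ} (hi : i < n) :
    valSeq (insertFun π a) i = shiftVal a (valSeq π i) := by
  simp only [valSeq, insertFun, shiftVal, dif_pos hi, dif_pos (Nat.lt_succ_of_lt hi)]
  split_ifs <;> rfl

theorem valSeq_insertFun_self : valSeq (insertFun π a) n = a := by
  simp [valSeq, insertFun]

theorem insertFun_injective : Function.Injective (insertFun π a) := by
  intro x y hxy
  rcases Fin.eq_castSucc_or_eq_last x with ⟨x, rfl⟩ | rfl <;>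
    rcases Fin.eq_castSucc_or_eq_last y with ⟨y, rfl⟩ | rfl <;>
    simp only [insertFun_castSucc, insertFun_last] at hxy
  · rw [π.injective (Fin.succAbove_right_injective hxy)]
  · exact absurd hxy (a.succAbove_ne _)
  · exact absurd hxy.symm (a.succAbove_ne _)
  · rfl

/-- The permutation `π · a`. -/
noncomputable def insertPerm : Equiv.Perm (Fin (n + 1)) :=
  Equiv.ofBijective _ (Finite.injective_iff_bijective.mp (insertFun_injective π a))

theorem coe_insertPerm : ⇑(insertPerm π a) = insertFun π a := rfl

end Insert

theorem insertPerm_bijective (n : ℕ) :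
    Function.Bijective fun x : Equiv.Perm (Fin n) × Fin (n + 1) => insertPerm x.1 x.2 := by
  constructor
  · rintro ⟨π, a⟩ ⟨π', a'⟩ h
    have hlast := congrArg (· (Fin.last n)) h
    simp only [coe_insertPerm, insertFun_last] at hlast
    subst hlast
    refine Prod.ext (Equiv.ext fun i => ?_) rfl
    have hi := congrArg (· i.castSucc) h
    simp only [coe_insertPerm, insertFun_castSucc] at hi
    exact Fin.succAbove_right_injective hi
  · intro σ
    have hne : ∀ i : Fin n, σ i.castSucc ≠ σ (Fin.last n) :=
      fun i => σ.injective.ne (Fin.castSucc_ne_last i)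
    choose g hg using fun i => Fin.exists_succAbove_eq (hne i)
    have hg_inj : Function.Injective g := fun i j hij =>
      Fin.castSucc_injective _ (σ.injective (by rw [← hg, ← hg, hij]))
    refine ⟨(Equiv.ofBijective g (Finite.injective_iff_bijective.mp hg_inj), σ (Fin.last n)),
      Equiv.ext fun x => ?_⟩
    rcases Fin.eq_castSucc_or_eq_last x with ⟨x, rfl⟩ | rfl
    · simp [coe_insertPerm, insertFun_castSucc, hg]
    · simp [coe_insertPerm, insertFun_last]

section Rank

variable {α : Type*} [LinearOrder α] (A : Finset α)

def rankIn (a : α) : ℕ := #{b ∈ A | b ≤ a}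

theorem rankIn_strictMonoOn : StrictMonoOn (rankIn A) A := by
  intro a _ b hb hab
  refine card_lt_card ((ssubset_iff_of_subset fun x hx => ?_).2 ⟨b, ?_, ?_⟩)
  · simp only [mem_filter] at hx ⊢
    exact ⟨hx.1, hx.2.trans hab.le⟩
  · exact mem_filter.2 ⟨hb, le_rfl⟩
  · simp [hab]

theorem rankIn_pos {a : α} (ha : a ∈ A) : 0 < rankIn A a :=
  card_pos.2 ⟨a, mem_filter.2 ⟨ha, le_rfl⟩⟩

theorem rankIn_le_card (a : α) : rankIn A a ≤ #A :=
  card_filter_le _ _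

theorem image_rankIn : A.image (rankIn A) = Icc 1 #A := by
  refine eq_of_subset_of_card_le (fun r hr => ?_) ?_
  · obtain ⟨a, ha, rfl⟩ := mem_image.1 hr
    exact mem_Icc.2 ⟨rankIn_pos A ha, rankIn_le_card A a⟩
  · rw [card_image_of_injOn (rankIn_strictMonoOn A).injOn, Nat.card_Icc, Nat.add_sub_cancel]

theorem card_filter_rankIn (P : ℕ → Prop) [DecidablePred P] :
    #{a ∈ A | P (rankIn A a)} = #{r ∈ Icc 1 #A | P r} := by
  rw [← image_rankIn, filter_image,
    card_image_of_injOn ((rankIn_strictMonoOn A).injOn.mono (filter_subset _ _))]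

theorem card_filter_lt (a : α) : #{b ∈ A | a < b} = #A - rankIn A a := by
  have := card_filter_add_card_filter_not (s := A) (· ≤ a)
  simp only [not_le] at this
  rw [rankIn]
  omega

theorem card_filter_le_of_mem {a : α} (ha : a ∈ A) :
    #{b ∈ A | a ≤ b} = #A - rankIn A a + 1 := by
  have : {b ∈ A | a ≤ b} = insert a {b ∈ A | a < b} := by
    ext b
    simp only [mem_filter, mem_insert, le_iff_eq_or_lt]
    constructor
    · rintro ⟨hb, rfl | h⟩ <;> simp_all
    · rintro (rfl | ⟨hb, h⟩) <;> simp_all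
  rw [this, card_insert_of_notMem (by simp), card_filter_lt]

end Rank

/-- The succession rule `Ω_strong`: the label of the child of a permutation with label `(h, k)`
obtained at its `r`-th active site from the bottom. -/
def omegaChild (h k r : ℕ) : ℕ × ℕ :=
  if r < h then (r, k) else if r = h then (h, k + 1) else (h + 1, h + k + 1 - r)

theorem card_omegaChild_eq {h k H K : ℕ} (hH : 1 ≤ H) :
    #{r ∈ Icc 1 (h + k) | omegaChild h k r = (H, K)} =
      (if H < h ∧ K = k then 1 else 0) + (if H = h ∧ K = k + 1 then 1 else 0) +
        (if H = h + 1 ∧ 1 ≤ K ∧ K ≤ k then 1 else 0) := by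
  have hmem : ∀ r, r ∈ ({r ∈ Icc 1 (h + k) | omegaChild h k r = (H, K)} : Finset ℕ) ↔
      1 ≤ r ∧ r ≤ h + k ∧ ((r < h ∧ r = H ∧ k = K) ∨ (r = h ∧ h = H ∧ k + 1 = K) ∨
        (h < r ∧ h + 1 = H ∧ h + k + 1 - r = K)) := by
    intro r
    rw [mem_filter, mem_Icc, omegaChild]
    split_ifs <;> simp only [Prod.mk.injEq] <;> omega
  by_cases c1 : H < h ∧ K = k
  · rw [if_pos c1, if_neg (by omega), if_neg (by omega), card_eq_one]
    exact ⟨H, by ext r; rw [hmem, mem_singleton]; omega⟩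
  by_cases c2 : H = h ∧ K = k + 1
  · rw [if_neg c1, if_pos c2, if_neg (by omega), card_eq_one]
    exact ⟨h, by ext r; rw [hmem, mem_singleton]; omega⟩
  by_cases c3 : H = h + 1 ∧ 1 ≤ K ∧ K ≤ k
  · rw [if_neg c1, if_neg c2, if_pos c3, card_eq_one]
    exact ⟨h + k + 1 - K, by ext r; rw [hmem, mem_singleton]; omega⟩
  rw [if_neg c1, if_neg c2, if_neg c3, card_eq_zero, eq_empty_iff_forall_notMem]
  intro r hr
  rw [hmem] at hr
  omega

open Classical

section Perm

variable {n : ℕ} (π : Equiv.Perm (Fin n))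

def IsBlocked (b : ℕ) : Prop := IsBlockedGap (valSeq π) n b

/-- The active sites of a strong-Baxter `π`, by `strongBaxterFun_insertFun_iff`. -/
noncomputable def activeSites : Finset ℕ := {b ∈ range (n + 1) | ¬ IsBlocked π b}

def lastEntry : ℕ := valSeq π (n - 1)

noncomputable def label : ℕ × ℕ :=
  (rankIn (activeSites π) (lastEntry π), #{b ∈ activeSites π | lastEntry π < b})

theorem mem_activeSites {b : ℕ} : b ∈ activeSites π ↔ b ≤ n ∧ ¬ IsBlocked π b := by
  rw [activeSites, mem_filter, mem_range, Nat.lt_succ_iff]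

theorem strongBaxterFun_insertFun_iff (a : Fin (n + 1)) :
    StrongBaxterFun (insertFun π a) ↔ IsStrongBaxter π ∧ ¬ IsBlocked π a := by
  rw [strongBaxterFun_iff, containsSB_succ_iff (fun i hi => valSeq_insertFun_of_lt π a hi)
    (valSeq_insertFun_self π a), IsStrongBaxter, strongBaxterFun_iff, not_or]
  rfl

theorem lastEntry_mem_activeSites (hπ : IsStrongBaxter π) (hn : 0 < n) :
    lastEntry π ∈ activeSites π :=
  (mem_activeSites π).2 ⟨(valSeq_lt π (by omega)).le,
    not_isBlockedGap_last ((strongBaxterFun_iff π).1 hπ) (valSeq_injOn π)⟩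

theorem label_fst_add_snd : (label π).1 + (label π).2 = #(activeSites π) := by
  have := rankIn_le_card (activeSites π) (lastEntry π)
  simp only [label, card_filter_lt]
  omega

theorem one_le_label_fst (hπ : IsStrongBaxter π) (hn : 0 < n) : 1 ≤ (label π).1 :=
  rankIn_pos _ (lastEntry_mem_activeSites π hπ hn)

theorem lastEntry_insertPerm (a : Fin (n + 1)) : lastEntry (insertPerm π a) = a :=
  valSeq_insertFun_self π a

/-- The gaps blocked in `π · a` beyond those inherited from `π` come from the last two
entries of `π · a`. -/
theorem isBlocked_insertPerm_iff (hn : 0 < n) (a : Fin (n + 1)) (b : ℕ) :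
    IsBlocked (insertPerm π a) b ↔ IsBlocked π (unshiftGap a b) ∨
      (lastEntry π < b ∧ b < a) ∨ (a < b ∧ b ≤ lastEntry π) ∨
        (a + 1 < b ∧ b = lastEntry π + 1) := by
  rw [IsBlocked, coe_insertPerm, isBlockedGap_succ_iff (fun i hi => valSeq_insertFun_of_lt π a hi)
    (valSeq_insertFun_self π a),
    exists_valSeq_of_lt_last_iff π hn (fun u => GapPattern (shiftVal a u) _ a b),
    exists_gapPattern_shiftVal_iff (valSeq_lt π (by omega)) (Nat.lt_succ_iff.1 a.isLt)]
  rfl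

theorem mem_activeSites_insertPerm_of_le (hn : 0 < n) {a : Fin (n + 1)} {b : ℕ} (hb : b ≤ a) :
    b ∈ activeSites (insertPerm π a) ↔
      b ∈ activeSites π ∧ ¬ (lastEntry π < b ∧ b < a) := by
  rw [mem_activeSites, mem_activeSites, isBlocked_insertPerm_iff π hn, unshiftGap, if_pos hb]
  have := a.isLt
  constructor
  · rintro ⟨-, h⟩
    exact ⟨⟨by omega, fun h' => h (Or.inl h')⟩, fun h' => h (Or.inr (Or.inl h'))⟩
  · rintro ⟨⟨-, h₁⟩, h₂⟩
    refine ⟨by omega, ?_⟩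
    rintro (h | h | h | h)
    exacts [h₁ h, h₂ h, by omega, by omega]

theorem succ_mem_activeSites_insertPerm (hn : 0 < n) {a : Fin (n + 1)} {c : ℕ} (hc : a ≤ c) :
    c + 1 ∈ activeSites (insertPerm π a) ↔
      c ∈ activeSites π ∧ lastEntry π ≤ c ∧ ¬ (a < c ∧ c = lastEntry π) := by
  rw [mem_activeSites, mem_activeSites, isBlocked_insertPerm_iff π hn, unshiftGap,
    if_neg (by omega), Nat.add_sub_cancel]
  constructor
  · rintro ⟨hcn, h⟩
    exact ⟨⟨by omega, fun h' => h (Or.inl h')⟩, by omega, fun h' => h (by omega)⟩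
  · rintro ⟨⟨hcn, h₁⟩, h₂, h₃⟩
    refine ⟨by omega, ?_⟩
    rintro (h | h | h | h)
    exacts [h₁ h, by omega, by omega, by omega]

theorem rankIn_activeSites_insertPerm (hn : 0 < n) {a : Fin (n + 1)}
    (ha : (a : ℕ) ∈ activeSites π) :
    rankIn (activeSites (insertPerm π a)) a =
      if (a : ℕ) ≤ lastEntry π then rankIn (activeSites π) a
      else rankIn (activeSites π) (lastEntry π) + 1 := by
  have hsites : {b ∈ activeSites (insertPerm π a) | b ≤ (a : ℕ)} =
      {b ∈ activeSites π | b ≤ (a : ℕ) ∧ ¬ (lastEntry π < b ∧ b < a)} := by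
    ext b
    simp only [mem_filter]
    constructor
    · rintro ⟨hb, hba⟩
      exact ⟨((mem_activeSites_insertPerm_of_le π hn hba).1 hb).1, hba,
        ((mem_activeSites_insertPerm_of_le π hn hba).1 hb).2⟩
    · rintro ⟨hb, hba, hgap⟩
      exact ⟨(mem_activeSites_insertPerm_of_le π hn hba).2 ⟨hb, hgap⟩, hba⟩
  rw [rankIn, hsites]
  split_ifs with hap
  · congr 1
    exact filter_congr fun b _ => by omega
  · have : {b ∈ activeSites π | b ≤ (a : ℕ) ∧ ¬ (lastEntry π < b ∧ b < a)} =
        insert (a : ℕ) {b ∈ activeSites π | b ≤ lastEntry π} := by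
      ext b
      simp only [mem_filter, mem_insert]
      constructor
      · rintro ⟨hb, h₁, h₂⟩
        by_cases hab : b = a
        exacts [Or.inl hab, Or.inr ⟨hb, by omega⟩]
      · rintro (rfl | ⟨hb, h⟩)
        exacts [⟨ha, le_rfl, by omega⟩, ⟨hb, by omega, by omega⟩]
    rw [this, card_insert_of_notMem (by simp only [mem_filter]; omega), rankIn]

theorem card_activeSites_insertPerm_gt (hn : 0 < n) (a : Fin (n + 1)) :
    #{b ∈ activeSites (insertPerm π a) | (a : ℕ) < b} =
      #{c ∈ activeSites π | (a : ℕ) ≤ c ∧ lastEntry π ≤ c ∧ ¬ ((a : ℕ) < c ∧ c = lastEntry π)} := by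
  symm
  rw [← card_image_of_injective _ (add_left_injective 1)]
  congr 1
  ext b
  simp only [mem_filter, mem_image]
  constructor
  · rintro ⟨c, ⟨hc, hac, hrest⟩, rfl⟩
    exact ⟨(succ_mem_activeSites_insertPerm π hn hac).2 ⟨hc, hrest⟩, by omega⟩
  · rintro ⟨hb, hab⟩
    obtain ⟨c, rfl⟩ : ∃ c, b = c + 1 := ⟨b - 1, by omega⟩
    have hc := (succ_mem_activeSites_insertPerm π hn (by omega : (a : ℕ) ≤ c)).1 hb
    exact ⟨c, ⟨hc.1, by omega, hc.2⟩, rfl⟩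

theorem label_insertPerm (hπ : IsStrongBaxter π) (hn : 0 < n) {h k : ℕ}
    (hl : label π = (h, k)) {a : Fin (n + 1)} (ha : (a : ℕ) ∈ activeSites π) :
    label (insertPerm π a) = omegaChild h k (rankIn (activeSites π) a) := by
  have hcard := label_fst_add_snd π
  rw [hl] at hcard
  simp only [label, Prod.mk.injEq] at hl
  obtain ⟨rfl, rfl⟩ := hl
  have hp := lastEntry_mem_activeSites π hπ hn
  have hle := rankIn_le_card (activeSites π) a
  rw [label, lastEntry_insertPerm, rankIn_activeSites_insertPerm π hn ha,
    card_activeSites_insertPerm_gt π hn, omegaChild]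
  rcases lt_trichotomy (a : ℕ) (lastEntry π) with hap | hap | hap
  · have hr := rankIn_strictMonoOn _ ha hp hap
    rw [if_pos hap.le, if_pos hr]
    congr 2
    exact filter_congr fun c _ => by omega
  · rw [if_pos hap.le, hap, if_neg (lt_irrefl _), if_pos rfl, card_filter_lt,
      ← card_filter_le_of_mem _ hp]
    congr 2
    exact filter_congr fun c _ => by omega
  · have hr := rankIn_strictMonoOn _ hp ha hap
    have hsites : {c ∈ activeSites π | (a : ℕ) ≤ c ∧ lastEntry π ≤ c ∧
        ¬ ((a : ℕ) < c ∧ c = lastEntry π)} = {c ∈ activeSites π | (a : ℕ) ≤ c} :=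
      filter_congr fun c _ => by omega
    rw [if_neg hap.not_ge, if_neg (by omega), if_neg (by omega), hsites,
      card_filter_le_of_mem _ ha]
    congr 1
    omega

theorem coe_mem_activeSites_of_strongBaxterFun {a : Fin (n + 1)}
    (h : StrongBaxterFun (insertFun π a)) : (a : ℕ) ∈ activeSites π :=
  (mem_activeSites π).2 ⟨Nat.lt_succ_iff.1 a.isLt, ((strongBaxterFun_insertFun_iff π a).1 h).2⟩

theorem card_filter_insertFun (hπ : IsStrongBaxter π) (P : ℕ → Prop) [DecidablePred P] :
    #{a : Fin (n + 1) | StrongBaxterFun (insertFun π a) ∧ P a} = #{b ∈ activeSites π | P b} := by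
  refine card_bij (fun a _ => (a : ℕ)) (fun a ha => ?_) (fun a _ b _ h => Fin.ext h) fun b hb => ?_
  · rw [mem_filter] at ha ⊢
    exact ⟨coe_mem_activeSites_of_strongBaxterFun π ha.2.1, ha.2.2⟩
  · rw [mem_filter, mem_activeSites] at hb
    refine ⟨⟨b, Nat.lt_succ_of_le hb.1.1⟩, mem_filter.2 ⟨mem_univ _, ?_, hb.2⟩, rfl⟩
    exact (strongBaxterFun_insertFun_iff π _).2 ⟨hπ, hb.1.2⟩

theorem card_insertPerm_label (hπ : IsStrongBaxter π) (hn : 0 < n) {h k : ℕ}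
    (hl : label π = (h, k)) {H : ℕ} (hH : 1 ≤ H) (K : ℕ) :
    #{a : Fin (n + 1) | IsStrongBaxter (insertPerm π a) ∧ label (insertPerm π a) = (H, K)} =
      (if H < h ∧ K = k then 1 else 0) + (if H = h ∧ K = k + 1 then 1 else 0) +
        (if H = h + 1 ∧ 1 ≤ K ∧ K ≤ k then 1 else 0) := by
  have hcard := label_fst_add_snd π
  rw [hl] at hcard
  have hchild : ∀ a : Fin (n + 1), IsStrongBaxter (insertPerm π a) ∧
      label (insertPerm π a) = (H, K) ↔ StrongBaxterFun (insertFun π a) ∧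
        omegaChild h k (rankIn (activeSites π) a) = (H, K) := fun a =>
    and_congr_right fun ha =>
      by rw [label_insertPerm π hπ hn hl (coe_mem_activeSites_of_strongBaxterFun π ha)]
  rw [filter_congr fun a _ => hchild a,
    card_filter_insertFun π hπ fun b => omegaChild h k (rankIn (activeSites π) b) = (H, K),
    card_filter_rankIn (activeSites π) fun r => omegaChild h k r = (H, K), ← hcard,
    card_omegaChild_eq hH]

end Perm

theorem card_label_succ {n : ℕ} (hn : 0 < n) {H : ℕ} (hH : 1 ≤ H) (K : ℕ) :
    #{σ : Equiv.Perm (Fin (n + 1)) | IsStrongBaxter σ ∧ label σ = (H, K)} =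
      #{π : Equiv.Perm (Fin n) | IsStrongBaxter π ∧ H < (label π).1 ∧ K = (label π).2} +
      #{π : Equiv.Perm (Fin n) | IsStrongBaxter π ∧ H = (label π).1 ∧ K = (label π).2 + 1} +
      #{π : Equiv.Perm (Fin n) |
        IsStrongBaxter π ∧ H = (label π).1 + 1 ∧ 1 ≤ K ∧ K ≤ (label π).2} := by
  calc _ = #{x : Equiv.Perm (Fin n) × Fin (n + 1) |
          IsStrongBaxter (insertPerm x.1 x.2) ∧ label (insertPerm x.1 x.2) = (H, K)} :=
        (card_equiv (Equiv.ofBijective _ (insertPerm_bijective n)) (by simp)).symm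
    _ = ∑ π, #{a : Fin (n + 1) |
          IsStrongBaxter (insertPerm π a) ∧ label (insertPerm π a) = (H, K)} := by
        simp only [card_filter, Fintype.sum_prod_type]
    _ = ∑ π ∈ univ.filter IsStrongBaxter,
          ((if H < (label π).1 ∧ K = (label π).2 then 1 else 0) +
            (if H = (label π).1 ∧ K = (label π).2 + 1 then 1 else 0) +
            (if H = (label π).1 + 1 ∧ 1 ≤ K ∧ K ≤ (label π).2 then 1 else 0)) := by
        rw [sum_filter]
        refine sum_congr rfl fun π _ => ?_
        by_cases hπ : IsStrongBaxter π
        · rw [if_pos hπ]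
          exact card_insertPerm_label π hπ hn rfl hH K
        · rw [if_neg hπ, card_eq_zero, filter_eq_empty_iff]
          exact fun a _ h => hπ ((strongBaxterFun_insertFun_iff π a).1 h.1).1
    _ = _ := by simp only [sum_add_distrib, ← card_filter, filter_filter]

theorem strongBaxterLabelCount_eq_card {n : ℕ} (hn : 0 < n) (h k : ℕ) :
    strongBaxterLabelCount n h k =
      #{π : Equiv.Perm (Fin n) | IsStrongBaxter π ∧ label π = (h, k)} := by
  rw [strongBaxterLabelCount, Nat.card_eq_fintype_card, Fintype.card_subtype]
  refine congrArg card (filter_congr fun π _ => and_congr_right fun hπ => ?_)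
  have hlast : ∀ h', ((π ⟨n - 1, h'⟩ : Fin n) : ℕ) = lastEntry π :=
    fun h' => (valSeq_of_lt π h').symm
  simp only [hlast, exists_prop_of_true hn, Nat.card_eq_fintype_card, Fintype.card_subtype,
    card_filter_insertFun π hπ (· ≤ lastEntry π), card_filter_insertFun π hπ (lastEntry π < ·),
    label, rankIn, Prod.mk.injEq, eq_comm]

theorem tsum_ite_card_filter {α : Type*} [Fintype α] (P : α → Prop) [DecidablePred P]
    (f : α → ℕ) (q : ℕ → Prop) [DecidablePred q] :
    ∑' m, (if q m then #{x | P x ∧ f x = m} else 0) = #{x | P x ∧ q (f x)} := by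
  rw [tsum_eq_sum (s := univ.image f) fun m hm => ?_,
    card_eq_sum_card_fiberwise fun x _ => mem_image_of_mem f (mem_univ x)]
  · refine sum_congr rfl fun m _ => ?_
    split_ifs with hm
    · rw [filter_filter]
      exact congrArg card (filter_congr fun x _ => by constructor <;> rintro ⟨hx, rfl⟩ <;> tauto)
    · rw [eq_comm, filter_filter, card_eq_zero, filter_eq_empty_iff]
      rintro x - ⟨⟨-, hx⟩, rfl⟩
      exact hm hx
  · rw [ite_eq_right_iff, card_eq_zero, filter_eq_empty_iff]
    rintro - x - ⟨-, rfl⟩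
    exact hm (mem_image_of_mem f (mem_univ x))

theorem tsum_ite_strongBaxterLabelCount_fst {n : ℕ} (hn : 0 < n) (q : ℕ → Prop)
    [DecidablePred q] (k : ℕ) :
    ∑' h', (if q h' then strongBaxterLabelCount n h' k else 0) =
      #{π : Equiv.Perm (Fin n) | IsStrongBaxter π ∧ q (label π).1 ∧ (label π).2 = k} := by
  have hcount : ∀ h', strongBaxterLabelCount n h' k =
      #{π : Equiv.Perm (Fin n) | (IsStrongBaxter π ∧ (label π).2 = k) ∧ (label π).1 = h'} :=
    fun h' => by
      rw [strongBaxterLabelCount_eq_card hn]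
      exact congrArg card (filter_congr fun π _ => by rw [Prod.ext_iff]; tauto)
  simp_rw [hcount, tsum_ite_card_filter]
  exact congrArg card (filter_congr fun π _ => by tauto)

theorem tsum_ite_strongBaxterLabelCount_snd {n : ℕ} (hn : 0 < n) (q : ℕ → Prop)
    [DecidablePred q] (h : ℕ) :
    ∑' k', (if q k' then strongBaxterLabelCount n h k' else 0) =
      #{π : Equiv.Perm (Fin n) | IsStrongBaxter π ∧ (label π).1 = h ∧ q (label π).2} := by
  have hcount : ∀ k', strongBaxterLabelCount n h k' =
      #{π : Equiv.Perm (Fin n) | (IsStrongBaxter π ∧ (label π).1 = h) ∧ (label π).2 = k'} :=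
    fun k' => by
      rw [strongBaxterLabelCount_eq_card hn]
      exact congrArg card (filter_congr fun π _ => by rw [Prod.ext_iff]; tauto)
  simp_rw [hcount, tsum_ite_card_filter]
  exact congrArg card (filter_congr fun π _ => by tauto)

theorem isStrongBaxter_and_label_of_one (π : Equiv.Perm (Fin 1)) :
    IsStrongBaxter π ∧ label π = (1, 1) := by
  have hsites : activeSites π = range 2 :=
    filter_true_of_mem fun b _ ⟨i, j, hij, hj, _⟩ => by omega
  have hlast : lastEntry π = 0 := Nat.lt_one_iff.1 (valSeq_lt π zero_lt_one)
  refine ⟨(strongBaxterFun_iff π).2 fun ⟨i, j, k, hij, hjk, hk, _⟩ => by omega, ?_⟩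
  rw [label, hsites, hlast]
  rfl

end StrongBaxter

/-- The recurrence on label counts encoded by the succession rule `Ω_strong`
(Proposition 5.3): the label `(h,k)` produces `(1,k),…,(h−1,k),(h,k+1)` and
`(h+1,1),…,(h+1,k)`. -/
theorem strongBaxter_omega_strong :
    strongBaxterLabelCount 1 1 1 = 1 ∧
    (∀ h k : ℕ, 1 ≤ h → 1 ≤ k → (h, k) ≠ (1, 1) → strongBaxterLabelCount 1 h k = 0) ∧
    (∀ n h k : ℕ, 1 ≤ n → 1 ≤ h → 1 ≤ k →
      strongBaxterLabelCount (n + 1) h k =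
        (∑' h' : ℕ, if h < h' then strongBaxterLabelCount n h' k else 0) +
          strongBaxterLabelCount n h (k - 1) +
          (if 2 ≤ h then ∑' k' : ℕ, (if k ≤ k' then strongBaxterLabelCount n (h - 1) k' else 0)
           else 0)) := by
  open Classical StrongBaxter Finset in
  refine ⟨?_, fun h k _ _ hne => ?_, fun n h k hn hh hk => ?_⟩
  · rw [strongBaxterLabelCount_eq_card one_pos,
      filter_true_of_mem fun π _ => isStrongBaxter_and_label_of_one π]
    rfl
  · rw [strongBaxterLabelCount_eq_card one_pos, card_eq_zero, filter_eq_empty_iff]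
    exact fun π _ hπ => hne (hπ.2.symm.trans (isStrongBaxter_and_label_of_one π).2)
  · rw [strongBaxterLabelCount_eq_card n.succ_pos, card_label_succ hn hh,
      tsum_ite_strongBaxterLabelCount_fst hn, strongBaxterLabelCount_eq_card hn]
    congr 1
    congr 1
    · exact congrArg card (filter_congr fun π _ => by tauto)
    · refine congrArg card (filter_congr fun π _ => ?_)
      rw [Prod.ext_iff]
      exact and_congr_right fun _ => by omega
    · split_ifs with h2
      · rw [tsum_ite_strongBaxterLabelCount_snd hn]
        exact congrArg card (filter_congr fun π _ => and_congr_right fun _ => by omega)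
      · refine card_eq_zero.2 (filter_eq_empty_iff.2 fun π _ hπ => ?_)
        have := one_le_label_fst π hπ.1 hn
        omega
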